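/- Let M be a metric space, L > 0, and let d_K denote the cone distance on K(M). Then for all x, x' ∈ M and all t, t' ∈ [0,L]: (i) d_K([x,t],[x',t'])² ≤ (t−t')² + (L−t)(L−t')·d(x,x')²; and (ii) if in addition d(x,x') ≤ 2, then d_K([x,t],[x',t'])² ≥ (t−t')² + (1/2)(L−t)(L−t')·d(x,x')². -/

import Mathlib

open Metric Set

/-- The cone distance on `M × [0,L]` (representatives of the cone
`K(M) = M × [0,L] / (M × {L})`):
`d_K([x,t],[x',t'])² = (L−t)² + (L−t')² − 2(L−t)(L−t')·cos(min{π, d(x,x')})`. -/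
noncomputable def coneDist {M : Type*} [PseudoMetricSpace M] (L : ℝ) (c c' : M × ℝ) : ℝ :=
  Real.sqrt ((L - c.2) ^ 2 + (L - c'.2) ^ 2 -
    2 * (L - c.2) * (L - c'.2) * Real.cos (min Real.pi (dist c.1 c'.1)))

open Real

/-! With `a = L - t`, `b = L - t'` and `θ = min π d(x,x')` the cone distance is the law of cosines,
`a² + b² - 2ab cos θ = (t - t')² + 2ab (1 - cos θ)`, so both bounds reduce to comparing
`1 - cos θ` with `θ²`: from above by `1 - cos θ ≤ θ²/2`, and from below, for `0 ≤ θ ≤ 2`,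
by `1 - cos θ = 2 sin²(θ/2)` together with `sin y ≥ y - y³/6 ≥ 5y/6` on `[0, 1]`. -/

lemma sq_div_four_le_one_sub_cos {x : ℝ} (h0 : 0 ≤ x) (h2 : x ≤ 2) :
    x ^ 2 / 4 ≤ 1 - cos x := by
  have hy0 : 0 ≤ x / 2 := by positivity
  have hsin : 5 / 6 * (x / 2) ≤ sin (x / 2) := by
    nlinarith [sin_ge_sub_cube hy0, mul_nonneg (mul_nonneg hy0 hy0) hy0]
  have hhalf : 1 - cos x = 2 * sin (x / 2) ^ 2 := by
    rw [← cos_sq_add_sin_sq (x / 2), ← mul_div_cancel₀ x two_ne_zero, cos_two_mul']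
    ring_nf
  rw [hhalf]
  nlinarith [pow_le_pow_left₀ (by positivity) hsin 2]

lemma coneDist_sq_eq {M : Type*} [PseudoMetricSpace M] (L : ℝ) (c c' : M × ℝ) :
    coneDist L c c' ^ 2 =
      (c.2 - c'.2) ^ 2 + 2 * (L - c.2) * (L - c'.2) * (1 - cos (min π (dist c.1 c'.1))) := by
  set a := L - c.2
  set b := L - c'.2
  set θ := min π (dist c.1 c'.1)
  have hcos : 2 * a * b * cos θ ≤ 2 * |a| * |b| :=
    calc 2 * a * b * cos θ ≤ |2 * a * b * cos θ| := le_abs_self _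
      _ = 2 * |a| * |b| * |cos θ| := by simp only [abs_mul, abs_two]
      _ ≤ 2 * |a| * |b| := mul_le_of_le_one_right (by positivity) (abs_cos_le_one θ)
  rw [coneDist, sq_sqrt (by nlinarith [sq_nonneg (|a| - |b|), sq_abs a, sq_abs b])]
  ring

theorem coneDist_sq_bounds_general {M : Type*} [MetricSpace M] (L : ℝ)
    (x x' : M) (t t' : ℝ) (ht : t ∈ Icc 0 L) (ht' : t' ∈ Icc 0 L) :
    (coneDist L (x, t) (x', t')) ^ 2 ≤
      (t - t') ^ 2 + (L - t) * (L - t') * dist x x' ^ 2 ∧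
    (dist x x' ≤ 2 →
      (t - t') ^ 2 + (1 / 2) * (L - t) * (L - t') * dist x x' ^ 2 ≤
        (coneDist L (x, t) (x', t')) ^ 2) := by
  rw [coneDist_sq_eq]
  have hab : 0 ≤ (L - t) * (L - t') := mul_nonneg (sub_nonneg.2 ht.2) (sub_nonneg.2 ht'.2)
  refine ⟨?_, fun hd2 => ?_⟩
  · have hθ : min π (dist x x') ^ 2 ≤ dist x x' ^ 2 :=
      pow_le_pow_left₀ (le_min pi_nonneg dist_nonneg) (min_le_right _ _) 2
    have hcos := one_sub_sq_div_two_le_cos (x := min π (dist x x'))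
    nlinarith [mul_le_mul_of_nonneg_left hθ hab, mul_le_mul_of_nonneg_left hcos hab]
  · rw [min_eq_right (by linarith [pi_gt_three])]
    nlinarith [mul_le_mul_of_nonneg_left (sq_div_four_le_one_sub_cos dist_nonneg hd2) hab]

/-- For all `x, x' ∈ M` and `t, t' ∈ [0,L]`:
(i) `d_K([x,t],[x',t'])² ≤ (t−t')² + (L−t)(L−t')·d(x,x')²`, and
(ii) if `d(x,x') ≤ 2` then `d_K([x,t],[x',t'])² ≥ (t−t')² + (1/2)(L−t)(L−t')·d(x,x')²`. -/
theorem coneDist_sq_bounds {M : Type*} [MetricSpace M] (L : ℝ) (hL : 0 < L)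
    (x x' : M) (t t' : ℝ) (ht : t ∈ Icc 0 L) (ht' : t' ∈ Icc 0 L) :
    (coneDist L (x, t) (x', t')) ^ 2 ≤
      (t - t') ^ 2 + (L - t) * (L - t') * dist x x' ^ 2 ∧
    (dist x x' ≤ 2 →
      (t - t') ^ 2 + (1 / 2) * (L - t) * (L - t') * dist x x' ^ 2 ≤
        (coneDist L (x, t) (x', t')) ^ 2) :=
  coneDist_sq_bounds_general L x x' t t' ht ht'
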